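/- arXiv:1602.06985 — 2 statements merged into one kernel-verified Lean document; each statement's English description precedes it below -/
import Mathlib

section
/- In a plane triangulation H with outer 4-cycle u,v,x,y where all four boundary vertices receive distinct colors from {1,2,3,4}, the coloring extends to a proper 5-coloring of H, provided the Four Color Theorem is assumed. -/
open SimpleGraph

/-- A closed walk is chordless (induced) if every adjacency of `G` between vertices of
the walk is an edge of the walk. -/
def WalkChordless {V : Type} {G : SimpleGraph V} {x : V} (c : G.Walk x x) : Prop :=
  ∀ ⦃a b : V⦄, a ∈ c.support → b ∈ c.support → G.Adj a b → s(a, b) ∈ c.edges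

/-- Distance (in `ℕ∞`, `⊤` if unreachable) from a set of vertices to a vertex. -/
noncomputable def setDist {V : Type} (G : SimpleGraph V) (A : Set V) (v : V) : ℕ∞ :=
  sInf {n : ℕ∞ | ∃ a ∈ A, ∃ p : G.Walk a v, (p.length : ℕ∞) = n}

/-- Distance (in `ℕ∞`) between two sets of vertices. -/
noncomputable def setSetDist {V : Type} (G : SimpleGraph V) (A B : Set V) : ℕ∞ :=
  sInf {n : ℕ∞ | ∃ a ∈ A, ∃ b ∈ B, ∃ p : G.Walk a b, (p.length : ℕ∞) = n}

/-- `K` is a minor of `H`: disjoint nonempty connected branch sets joined as in `K`. -/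
def HasGraphMinor {W W' : Type} (H : SimpleGraph W) (K : SimpleGraph W') : Prop :=
  ∃ f : W' → Set W,
    (∀ i, (f i).Nonempty) ∧ (∀ i, (H.induce (f i)).Connected) ∧
    (Pairwise fun i j => Disjoint (f i) (f j)) ∧
    (∀ ⦃i j : W'⦄, K.Adj i j → ∃ a ∈ f i, ∃ b ∈ f j, H.Adj a b)

/-- Planarity via Wagner's theorem: no `K₅` and no `K₃,₃` minor. -/
def IsPlanar {W : Type} (H : SimpleGraph W) : Prop :=
  ¬ HasGraphMinor H (completeGraph (Fin 5)) ∧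
  ¬ HasGraphMinor H (completeBipartiteGraph (Fin 3) (Fin 3))

/-- Abstract data of a 2-cell embedding of a simple graph `G` in a surface:
Euler genus, orientability, contractibility/homotopy of closed walks, faces,
sidedness, local left/right neighbours along walks, and interiors of
contractible cycles. -/
structure SurfaceEmbedding {V : Type} (G : SimpleGraph V) where
  eulerGenus : ℕ
  orientable : Prop
  IsCellular : Prop
  IsTriangulation : Prop
  Contractible : ∀ ⦃x : V⦄, G.Walk x x → Prop
  TwoSided : ∀ ⦃x : V⦄, G.Walk x x → Prop
  Homotopic : ∀ ⦃x y : V⦄, G.Walk x x → G.Walk y y → Prop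
  BoundsFace : ∀ ⦃x : V⦄, G.Walk x x → Prop
  rightAt : ∀ ⦃a b : V⦄, G.Walk a b → V → Set V
  leftAt : ∀ ⦃a b : V⦄, G.Walk a b → V → Set V
  rightAt_adj : ∀ ⦃a b : V⦄ (p : G.Walk a b) (v u : V), u ∈ rightAt p v → G.Adj v u
  leftAt_adj : ∀ ⦃a b : V⦄ (p : G.Walk a b) (v u : V), u ∈ leftAt p v → G.Adj v u
  Inside : ∀ ⦃x : V⦄, G.Walk x x → Set V

namespace SurfaceEmbedding

variable {V : Type} {G : SimpleGraph V}

/-- A noncontractible cycle of the embedding. -/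
def IsNCCycle (emb : SurfaceEmbedding G) {x : V} (c : G.Walk x x) : Prop :=
  c.IsCycle ∧ ¬ emb.Contractible c

/-- The width (edge-width) of the embedding: length of a shortest noncontractible cycle. -/
noncomputable def width (emb : SurfaceEmbedding G) : ℕ∞ :=
  sInf {n : ℕ∞ | ∃ (x : V) (c : G.Walk x x), emb.IsNCCycle c ∧ (c.length : ℕ∞) = n}

/-- `c` is a shortest noncontractible cycle. -/
def IsShortestNC (emb : SurfaceEmbedding G) {x : V} (c : G.Walk x x) : Prop :=
  emb.IsNCCycle c ∧ ∀ ⦃y : V⦄ (e : G.Walk y y), emb.IsNCCycle e → c.length ≤ e.length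

/-- A witness of length `n` for `ncdist`: either a noncontractible cycle meeting `c`
in exactly one vertex, or a path with both ends on `c`, interior disjoint from `c`,
forming a noncontractible cycle with every arc of `c` between its endpoints. -/
def IsNCDistWitness (emb : SurfaceEmbedding G) {x : V} (c : G.Walk x x) (n : ℕ) : Prop :=
  (∃ (a : V) (P : G.Walk a a), a ∈ c.support ∧ P.IsCycle ∧
      (∀ v ∈ P.support, v ∈ c.support → v = a) ∧ ¬ emb.Contractible P ∧ P.length = n) ∨
  (∃ (a b : V) (P : G.Walk a b), a ≠ b ∧ a ∈ c.support ∧ b ∈ c.support ∧ P.IsPath ∧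
      (∀ v ∈ P.support, v ∈ c.support → v = a ∨ v = b) ∧
      (∀ Q : G.Walk b a, Q.IsPath → Q.edges ⊆ c.edges → ¬ emb.Contractible (P.append Q)) ∧
      P.length = n)

/-- `ncdist` of a cycle: minimum length of an `ncdist` witness (`⊤` if none exists). -/
noncomputable def ncdist (emb : SurfaceEmbedding G) {x : V} (c : G.Walk x x) : ℕ∞ :=
  sInf {n : ℕ∞ | ∃ m : ℕ, emb.IsNCDistWitness c m ∧ (m : ℕ∞) = n}

/-- Right neighbours of a walk. -/
def RightNbrs (emb : SurfaceEmbedding G) {a b : V} (p : G.Walk a b) : Set V :=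
  {u | ∃ v ∈ p.support, u ∈ emb.rightAt p v}

/-- Left neighbours of a walk. -/
def LeftNbrs (emb : SurfaceEmbedding G) {a b : V} (p : G.Walk a b) : Set V :=
  {u | ∃ v ∈ p.support, u ∈ emb.leftAt p v}

/-- `R^k(C)`: vertices at distance exactly `k` from `C` reached by a shortest path
whose first edge leaves `C` to the right. -/
def Rlevel (emb : SurfaceEmbedding G) {x : V} (c : G.Walk x x) (k : ℕ) : Set V :=
  {v | setDist G {w | w ∈ c.support} v = (k : ℕ∞) ∧
    ∃ u ∈ c.support, ∃ p : G.Walk u v, p.IsPath ∧ p.length = k ∧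
      p.getVert 1 ∈ emb.RightNbrs c}

/-- `L^k(C)`: vertices at distance exactly `k` from `C` reached by a shortest path
whose first edge leaves `C` to the left. -/
def Llevel (emb : SurfaceEmbedding G) {x : V} (c : G.Walk x x) (k : ℕ) : Set V :=
  {v | setDist G {w | w ∈ c.support} v = (k : ℕ∞) ∧
    ∃ u ∈ c.support, ∃ p : G.Walk u v, p.IsPath ∧ p.length = k ∧
      p.getVert 1 ∈ emb.LeftNbrs c}

/-- The `k`-th canonical cycle of `x`: a contractible cycle `D` with `x` inside, all
of whose vertices are at distance exactly `k` from `x`, joined to `x` by paths of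
length `k` inside the closed disk bounded by `D`. -/
def IsCanonicalCycle (emb : SurfaceEmbedding G) (x : V) (k : ℕ) {y : V}
    (D : G.Walk y y) : Prop :=
  D.IsCycle ∧ emb.Contractible D ∧ x ∈ emb.Inside D ∧
  (∀ z ∈ D.support, G.dist x z = k) ∧
  (∀ z ∈ D.support, ∃ p : G.Walk x z, p.length = k ∧
     ∀ v ∈ p.support, v ∈ emb.Inside D ∨ v ∈ D.support)

/-- The result of cutting the embedded graph `G` along a chordless noncontractible
cycle `C` and capping with apex vertices: a new embedded graph `G'` together with
the projection back to `G` (apex vertices project to `none`). -/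
structure Cutting (emb : SurfaceEmbedding G) {x : V} (C : G.Walk x x) where
  V' : Type
  G' : SimpleGraph V'
  emb' : SurfaceEmbedding G'
  proj : V' → Option V
  proj_edge : ∀ ⦃a b : V'⦄, G'.Adj a b → ∀ u v : V,
    proj a = some u → proj b = some v → G.Adj u v
  tri : emb.IsTriangulation → emb'.IsTriangulation

/-- Cutting along a 2-sided cycle yields two apex vertices, one for each side. -/
structure TwoSidedCutting (emb : SurfaceEmbedding G) {x : V} (C : G.Walk x x)
    extends Cutting emb C where
  apexR : toCutting.V'
  apexL : toCutting.V'
  apexR_proj : toCutting.proj apexR = none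
  apexL_proj : toCutting.proj apexL = none
  apex_ne : apexR ≠ apexL

/-- A 6-shortcut for a cycle `C`: a path `P` of length 6 with both ends on `C`,
together with an arc `A` of `C`, so that `P.append A` is a noncontractible cycle
homotopic to `C`. -/
structure SixShortcut (emb : SurfaceEmbedding G) {x : V} (C : G.Walk x x) where
  a : V
  b : V
  P : G.Walk a b
  A : G.Walk b a
  P_len : P.length = 6
  P_path : P.IsPath
  ha : a ∈ C.support
  hb : b ∈ C.support
  arc_sub : A.edges ⊆ C.edges
  arc_path : A.IsPath
  cyc : (P.append A).IsCycle
  noncontr : ¬ emb.Contractible (P.append A)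
  homot : emb.Homotopic (P.append A) C

/-- The cycle `C'` produced by a 6-shortcut. -/
def SixShortcut.newCycle {emb : SurfaceEmbedding G} {x : V} {C : G.Walk x x}
    (s : SixShortcut emb C) : G.Walk s.a s.a := s.P.append s.A

/-- A 6-shortcut is optimal if the resulting cycle is as short as possible. -/
def SixShortcut.IsOptimal {emb : SurfaceEmbedding G} {x : V} {C : G.Walk x x}
    (s : SixShortcut emb C) : Prop :=
  ∀ t : SixShortcut emb C, s.newCycle.length ≤ t.newCycle.length

/-- A contractible 4-cycle bounds two triangular faces sharing a diagonal. -/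
def IsDoubleTriangle (emb : SurfaceEmbedding G) {y : V} (D : G.Walk y y) : Prop :=
  ∃ (a c : V), G.Adj a c ∧ a ∈ D.support ∧ c ∈ D.support ∧ s(a, c) ∉ D.edges ∧
    ∃ (T₁ T₂ : G.Walk a a), T₁.IsCycle ∧ T₂.IsCycle ∧ T₁.length = 3 ∧ T₂.length = 3 ∧
      emb.BoundsFace T₁ ∧ emb.BoundsFace T₂ ∧ s(a, c) ∈ T₁.edges ∧ s(a, c) ∈ T₂.edges ∧
      (∀ v ∈ T₁.support, v ∈ D.support) ∧ (∀ v ∈ T₂.support, v ∈ D.support) ∧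
      (∀ e ∈ D.edges, e ∈ T₁.edges ∨ e ∈ T₂.edges)

/-- A 4-cycle is the first neighbour circuit of a vertex of degree 4. -/
def IsFirstNbrCircuit (emb : SurfaceEmbedding G) {y : V} (D : G.Walk y y) : Prop :=
  ∃ v : V, (G.neighborSet v).ncard = 4 ∧ G.neighborSet v = {w | w ∈ D.support} ∧
    v ∈ emb.Inside D

/-- The induced subgraph on `U` is orderly: every contractible 3-cycle in `U` bounds
a face, and every contractible 4-cycle in `U` bounds two triangles sharing an edge
or is the first neighbour circuit of a vertex of degree 4. -/
def Orderly (emb : SurfaceEmbedding G) (U : Set V) : Prop :=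
  (∀ ⦃y : V⦄ (D : G.Walk y y), D.IsCycle → (∀ v ∈ D.support, v ∈ U) → D.length = 3 →
      emb.Contractible D → emb.BoundsFace D) ∧
  (∀ ⦃y : V⦄ (D : G.Walk y y), D.IsCycle → (∀ v ∈ D.support, v ∈ U) → D.length = 4 →
      emb.Contractible D → emb.IsDoubleTriangle D ∨ emb.IsFirstNbrCircuit D)

/-- A witness for `ctdist` of a 2-sided cycle `C`: a path (or cycle) with both ends
on `C`, interior disjoint from `C`, starting with an edge on one side of `C` and
ending with an edge on the other side. -/
def IsCrossWitness (emb : SurfaceEmbedding G) {x : V} (C : G.Walk x x)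
    {a b : V} (P : G.Walk a b) : Prop :=
  a ∈ C.support ∧ b ∈ C.support ∧ 1 ≤ P.length ∧
  (∀ v ∈ P.support, v ∈ C.support → v = a ∨ v = b) ∧
  ((P.getVert 1 ∈ emb.RightNbrs C ∧ P.getVert (P.length - 1) ∈ emb.LeftNbrs C) ∨
   (P.getVert 1 ∈ emb.LeftNbrs C ∧ P.getVert (P.length - 1) ∈ emb.RightNbrs C)) ∧
  (∀ h : a = b, (P.copy rfl h.symm).IsCycle) ∧ (a ≠ b → P.IsPath)

/-- `ctdist` of a 2-sided cycle: minimum length of a side-crossing witness. -/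
noncomputable def ctdist (emb : SurfaceEmbedding G) {x : V} (C : G.Walk x x) : ℕ∞ :=
  sInf {n : ℕ∞ | ∃ (a b : V) (P : G.Walk a b),
    emb.IsCrossWitness C P ∧ (P.length : ℕ∞) = n}

end SurfaceEmbedding


private lemma four_color_relabel_inj (fu fv fx : Fin 4) (cu cv cx z : Fin 5)
    (huv : fu ≠ fv) (hux : fu ≠ fx) (hvx : fv ≠ fx)
    (cuv : cu ≠ cv) (cux : cu ≠ cx) (cvx : cv ≠ cx)
    (zu : z ≠ cu) (zv : z ≠ cv) (zx : z ≠ cx) :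
    Function.Injective
      (fun i : Fin 4 => if i = fu then cu else if i = fv then cv else if i = fx then cx else z) := by
  have key : ∀ fu fv fx i j : Fin 4, fu ≠ fv → fu ≠ fx → fv ≠ fx →
      i ≠ fu → i ≠ fv → i ≠ fx → j ≠ fu → j ≠ fv → j ≠ fx → i = j := by decide
  intro i j h
  simp only at h
  split_ifs at h <;> simp_all
  exact key fu fv fx i j huv hux hvx (by assumption) (by assumption) (by assumption)
    (by assumption) (by assumption) (by assumption)


/-- in a plane (near-)triangulation `H` with outer 4-cycle `u,v,x,y`
(`H` plus the edge `ux` being planar), assuming the Four Color Theorem, every proper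
coloring of the outer 4-cycle with four distinct colors extends to a proper
5-coloring of `H`. -/
theorem extend_coloring_outer_four_cycle_distinct
    {W : Type} (H : SimpleGraph W) (hpl : IsPlanar H)
    (u v x y : W)
    (huv : H.Adj u v) (hvx : H.Adj v x) (hxy : H.Adj x y) (hyu : H.Adj y u)
    (hux : u ≠ x) (hvy : v ≠ y)
    (hplus : IsPlanar (H ⊔ SimpleGraph.fromEdgeSet {s(u, x)}))
    (hFCT : ∀ (W' : Type) (K : SimpleGraph W'), IsPlanar K →
      ∃ f : W' → Fin 4, ∀ ⦃p q : W'⦄, K.Adj p q → f p ≠ f q)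
    (c₀ : W → Fin 5)
    (huv' : c₀ u ≠ c₀ v) (hux' : c₀ u ≠ c₀ x) (huy' : c₀ u ≠ c₀ y)
    (hvx' : c₀ v ≠ c₀ x) (hvy' : c₀ v ≠ c₀ y) (hxy' : c₀ x ≠ c₀ y) :

    ∃ c : W → Fin 5, (∀ ⦃p q : W⦄, H.Adj p q → c p ≠ c q) ∧
      c u = c₀ u ∧ c v = c₀ v ∧ c x = c₀ x ∧ c y = c₀ y := by
  classical
  obtain ⟨f, hf⟩ := hFCT W (H ⊔ SimpleGraph.fromEdgeSet {s(u, x)}) hplus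
  have hle : ∀ ⦃p q : W⦄, H.Adj p q → (H ⊔ SimpleGraph.fromEdgeSet {s(u, x)}).Adj p q :=
    fun p q h => Or.inl h
  have hfux : f u ≠ f x := hf (Or.inr ⟨rfl, hux⟩)
  have hfuv : f u ≠ f v := hf (hle huv)
  have hfvx : f v ≠ f x := hf (hle hvx)
  -- find a fifth color z avoiding all four c₀ values
  obtain ⟨z, hz⟩ : ∃ z : Fin 5, z ∉ ({c₀ u, c₀ v, c₀ x, c₀ y} : Finset (Fin 5)) := by
    by_contra h
    push_neg at h
    have hsub : (Finset.univ : Finset (Fin 5)) ⊆ {c₀ u, c₀ v, c₀ x, c₀ y} :=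
      fun z _ => h z
    have h5 : (5 : ℕ) ≤ ({c₀ u, c₀ v, c₀ x, c₀ y} : Finset (Fin 5)).card := by
      simpa using Finset.card_le_card hsub
    have h4 : ({c₀ u, c₀ v, c₀ x, c₀ y} : Finset (Fin 5)).card ≤ 4 := by
      refine (Finset.card_insert_le _ _).trans (Nat.succ_le_succ ?_)
      refine (Finset.card_insert_le _ _).trans (Nat.succ_le_succ ?_)
      exact (Finset.card_insert_le _ _).trans (by simp)
    omega
  simp only [Finset.mem_insert, Finset.mem_singleton, not_or] at hz
  obtain ⟨hzu, hzv, hzx, hzy⟩ := hz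
  set g : Fin 4 → Fin 5 :=
    fun i => if i = f u then c₀ u else if i = f v then c₀ v else if i = f x then c₀ x else z
    with hg_def
  have hg : Function.Injective g :=
    four_color_relabel_inj (f u) (f v) (f x) (c₀ u) (c₀ v) (c₀ x) z
      hfuv hfux hfvx huv' hux' hvx' hzu hzv hzx
  have hgy : ∀ i : Fin 4, g i ≠ c₀ y := by
    intro i
    simp only [hg_def]
    split_ifs with h1 h2 h3
    · exact huy'
    · exact hvy'
    · exact hxy'
    · exact hzy
  have hyu' : y ≠ u := fun h => (h ▸ hyu).ne rfl
  have hyv : y ≠ v := hvy.symm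
  have hyx : y ≠ x := fun h => (h ▸ hxy).ne' rfl
  refine ⟨fun w => if w = y then c₀ y else g (f w), ?_, ?_, ?_, ?_, ?_⟩
  · intro p q hpq
    have hfpq : f p ≠ f q := hf (hle hpq)
    by_cases hp : p = y <;> by_cases hq : q = y
    · exact absurd (hp.trans hq.symm) hpq.ne
    · simp only [hp, if_pos rfl, if_neg hq]
      exact fun h => hgy (f q) h.symm
    · simp only [hq, if_pos rfl, if_neg hp]
      exact hgy (f p)
    · simp only [if_neg hp, if_neg hq]
      exact fun h => hfpq (hg h)
  · simp [if_neg hyu'.symm, hg_def]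
  · simp only [if_neg hyv.symm, hg_def]
    rw [if_neg (Ne.symm hfuv)]
    simp
  · simp only [if_neg hyx.symm, hg_def]
    rw [if_neg (Ne.symm hfux), if_neg (Ne.symm hfvx)]
    simp
  · simp
end

section
/- Let G be a graph properly 4-colored by c, and let x, y be two vertices at distance at least 6 with c(x) ≠ c(y). Recolor every vertex at distance exactly 1 or 2 from y that has color c(y) with a new fifth color, then perform a Kempe (c(x),c(y))-interchange on the component of the (c(x),c(y))-subgraph containing y. The result is a proper 5-coloring in which x and y receive the same color and no vertex within distance 2 of x changed its color. -/
open SimpleGraph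

/-- Reachability within a set of vertices. -/
def reachIn {V : Type} (G : SimpleGraph V) (T : Set V) (u v : V) : Prop :=
  ∃ p : G.Walk u v, ∀ w ∈ p.support, w ∈ T

open Classical in
/-- The recoloring of the proof: recolor every vertex at distance 1 or 2 from `y`
having color `c y` with the new color 5, then perform a Kempe
`(c x, c y)`-interchange on the component containing `y`. -/
noncomputable def kempeRecolor {V : Type} (G : SimpleGraph V) (c : V → ℕ)
    (x y : V) : V → ℕ :=
  let c₁ : V → ℕ := fun v =>
    if (G.dist y v = 1 ∨ G.dist y v = 2) ∧ c v = c y then 5 else c v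
  let T : Set V := {v | c₁ v = c x ∨ c₁ v = c y}
  fun v => if v ∈ T ∧ reachIn G T y v then (if c₁ v = c x then c y else c x) else c₁ v

/-! Once the vertices at distance 1 or 2 from `y` have lost the colour `c y`, a `(c x, c y)`-walk
from `y` can never get further than a neighbour of `y`: so the Kempe component of `y` lies in
its closed neighbourhood. Swapping colours on it is an ordinary Kempe interchange, hence keeps
the colouring proper and gives `y` the colour `c x`; and since `x` is at distance at least 6
from `y`, nothing within distance 2 of `x` is touched by either step. -/

namespace reachIn

variable {V : Type} {G : SimpleGraph V} {T : Set V} {u v w : V}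

theorem concat (h : reachIn G T u v) (hw : w ∈ T) (hvw : G.Adj v w) : reachIn G T u w := by
  obtain ⟨p, hp⟩ := h
  refine ⟨p.concat hvw, fun z hz => ?_⟩
  rw [SimpleGraph.Walk.support_concat, List.mem_append, List.mem_singleton] at hz
  rcases hz with hz | rfl
  exacts [hp z hz, hw]

theorem mem_of_closed {S : Set V} (hu : u ∈ S)
    (hS : ∀ a ∈ S, ∀ b ∈ T, G.Adj a b → b ∈ S) (h : reachIn G T u v) : v ∈ S := by
  obtain ⟨p, hp⟩ := h
  induction p with
  | nil => exact hu
  | cons hab q ih =>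
    exact ih (hS _ hu _ (hp _ (by simp)) hab) fun z hz => hp z (by simp [hz])

end reachIn

section KempeInterchange

variable {V α : Type} [DecidableEq α] (G : SimpleGraph V)

-- Reducible, so that membership is decided by `Set.decidableSetOf` exactly as in `kempeRecolor`.
abbrev bicolored (f : V → α) (a b : α) : Set V :=
  {v | f v = a ∨ f v = b}

open Classical in
noncomputable def kempeSwap (f : V → α) (a b : α) (y : V) : V → α :=
  fun v => if v ∈ bicolored f a b ∧ reachIn G (bicolored f a b) y v then
    (if f v = a then b else a) else f v

variable {G} {f : V → α} {a b : α} {y : V}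

theorem kempeSwap_apply_of_not_reachIn {v : V} (hv : ¬ reachIn G (bicolored f a b) y v) :
    kempeSwap G f a b y v = f v :=
  if_neg fun h => hv h.2

theorem kempeSwap_apply_self (hy : f y = b) (hab : a ≠ b) : kempeSwap G f a b y y = a := by
  have hmem : y ∈ bicolored f a b := Or.inr hy
  rw [kempeSwap, if_pos ⟨hmem, .nil, by simpa using hmem⟩, if_neg (hy ▸ hab.symm)]

theorem kempeSwap_mem {S : Set α} (hf : ∀ v, f v ∈ S) (ha : a ∈ S) (hb : b ∈ S) (v : V) :
    kempeSwap G f a b y v ∈ S := by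
  unfold kempeSwap
  split_ifs
  exacts [hb, ha, hf v]

theorem kempeSwap_ne_of_reachIn_of_not_reachIn {p q : V} (hpq : G.Adj p q)
    (hp : p ∈ bicolored f a b ∧ reachIn G (bicolored f a b) y p)
    (hq : ¬ (q ∈ bicolored f a b ∧ reachIn G (bicolored f a b) y q)) :
    kempeSwap G f a b y p ≠ kempeSwap G f a b y q := by
  have hqT : q ∉ bicolored f a b := fun hqT => hq ⟨hqT, hp.2.concat hqT hpq⟩
  simp only [bicolored, Set.mem_ofPred_eq, not_or] at hqT
  rw [kempeSwap, kempeSwap, if_pos hp, if_neg hq]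
  split_ifs
  exacts [Ne.symm hqT.2, Ne.symm hqT.1]

theorem kempeSwap_proper (hf : ∀ ⦃p q : V⦄, G.Adj p q → f p ≠ f q) ⦃p q : V⦄
    (hpq : G.Adj p q) : kempeSwap G f a b y p ≠ kempeSwap G f a b y q := by
  by_cases hp : p ∈ bicolored f a b ∧ reachIn G (bicolored f a b) y p <;>
    by_cases hq : q ∈ bicolored f a b ∧ reachIn G (bicolored f a b) y q
  · have hfpq := hf hpq
    rw [kempeSwap, kempeSwap, if_pos hp, if_pos hq]
    rcases hp.1 with hpa | hpb <;> rcases hq.1 with hqa | hqb <;> grind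
  · exact kempeSwap_ne_of_reachIn_of_not_reachIn hpq hp hq
  · exact (kempeSwap_ne_of_reachIn_of_not_reachIn hpq.symm hq hp).symm
  · rw [kempeSwap, kempeSwap, if_neg hp, if_neg hq]
    exact hf hpq

end KempeInterchange

section RecolorNear

variable {V α : Type} [DecidableEq α] (G : SimpleGraph V)

noncomputable def recolorNear (c : V → α) (y : V) (k : α) : V → α :=
  fun v => if (G.dist y v = 1 ∨ G.dist y v = 2) ∧ c v = c y then k else c v

variable {G} {c : V → α} {y : V} {k : α}

theorem recolorNear_apply_of_not_near {v : V} (hv : ¬ (G.dist y v = 1 ∨ G.dist y v = 2)) :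
    recolorNear G c y k v = c v :=
  if_neg fun h => hv h.1

theorem recolorNear_apply_self : recolorNear G c y k y = c y :=
  recolorNear_apply_of_not_near (by simp)

theorem recolorNear_ne_of_near (hk : ∀ v, c v ≠ k) {v : V}
    (hv : G.dist y v = 1 ∨ G.dist y v = 2) : recolorNear G c y k v ≠ c y := by
  unfold recolorNear
  split_ifs with h
  · exact (hk y).symm
  · exact fun hcv => h ⟨hv, hcv⟩

theorem recolorNear_mem {S : Set α} (hc : ∀ v, c v ∈ S) (hk : k ∈ S) (v : V) :
    recolorNear G c y k v ∈ S := by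
  unfold recolorNear
  split_ifs
  exacts [hk, hc v]

theorem recolorNear_proper (hc : ∀ ⦃p q : V⦄, G.Adj p q → c p ≠ c q) (hk : ∀ v, c v ≠ k)
    ⦃p q : V⦄ (hpq : G.Adj p q) : recolorNear G c y k p ≠ recolorNear G c y k q := by
  unfold recolorNear
  split_ifs with hp hq hq
  · exact absurd (hp.2.trans hq.2.symm) (hc hpq)
  exacts [(hk q).symm, hk p, hc hpq]

theorem dist_eq_one_or_two_of_adj_of_adj {u v : V} (hyu : G.Adj y u) (huv : G.Adj u v)
    (hvy : v ≠ y) : G.dist y v = 1 ∨ G.dist y v = 2 := by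
  let p : G.Walk y v := .cons hyu (.cons huv .nil)
  have hle : G.dist y v ≤ 2 := SimpleGraph.dist_le p
  have hne : G.dist y v ≠ 0 :=
    SimpleGraph.dist_ne_zero_iff_ne_and_reachable.mpr ⟨hvy.symm, p.reachable⟩
  omega

theorem reachIn_bicolored_recolorNear (hc : ∀ ⦃p q : V⦄, G.Adj p q → c p ≠ c q)
    (hk : ∀ v, c v ≠ k) {a : α} {v : V}
    (h : reachIn G (bicolored (recolorNear G c y k) a (c y)) y v) : v = y ∨ G.Adj y v := by
  set c' := recolorNear G c y k
  suffices v = y ∨ (G.Adj y v ∧ c' v = a) from this.imp_right And.left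
  refine h.mem_of_closed (S := {v | v = y ∨ (G.Adj y v ∧ c' v = a)}) (Or.inl rfl) ?_
  rintro u (rfl | ⟨hyu, hu⟩) w (hw | hw) huw
  · exact Or.inr ⟨huw, hw⟩
  · exact absurd hw (recolorNear_ne_of_near hk (.inl (SimpleGraph.dist_eq_one_iff_adj.mpr huw)))
  · exact absurd (hu.trans hw.symm) (recolorNear_proper hc hk huw)
  · by_contra hwy
    exact recolorNear_ne_of_near hk
      (dist_eq_one_or_two_of_adj_of_adj hyu huw fun h => hwy (.inl h)) hw

theorem kempeSwap_recolorNear_apply_of_far (hc : ∀ ⦃p q : V⦄, G.Adj p q → c p ≠ c q)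
    (hk : ∀ v, c v ≠ k) {a : α} {v : V} (hv : ∀ q : G.Walk y v, 3 ≤ q.length) :
    kempeSwap G (recolorNear G c y k) a (c y) y v = c v := by
  have hnotreach : ¬ reachIn G (bicolored (recolorNear G c y k) a (c y)) y v := fun h =>
    (reachIn_bicolored_recolorNear hc hk h).elim
      (fun hvy => by subst hvy; simpa using hv .nil)
      (fun hyv => by simpa using hv (.cons hyv .nil))
  have hnotnear : ¬ (G.dist y v = 1 ∨ G.dist y v = 2) := fun hd => by
    obtain ⟨q, hq⟩ := SimpleGraph.exists_walk_of_dist_ne_zero (by omega : G.dist y v ≠ 0)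
    have := hv q
    omega
  rw [kempeSwap_apply_of_not_reachIn hnotreach, recolorNear_apply_of_not_near hnotnear]

end RecolorNear

theorem kempeRecolor_eq_kempeSwap {V : Type} (G : SimpleGraph V) (c : V → ℕ) (x y : V) :
    kempeRecolor G c x y = kempeSwap G (recolorNear G c y 5) (c x) (c y) y :=
  rfl

/-- starting from a proper 4-coloring `c` and vertices `x, y` at
distance at least 6 with `c x ≠ c y`, the recoloring-plus-Kempe-interchange yields a
proper 5-coloring in which `x` and `y` get the same color and no vertex within
distance 2 of `x` changed its color. -/
theorem kempe_recolor_identifies_colors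
    {V : Type} (G : SimpleGraph V) (c : V → ℕ)
    (hrange : ∀ v, c v ∈ ({1, 2, 3, 4} : Set ℕ))
    (hproper : ∀ ⦃p q : V⦄, G.Adj p q → c p ≠ c q)
    (x y : V) (hxy : c x ≠ c y)
    (hdist : ∀ p : G.Walk x y, 6 ≤ p.length) :
    (∀ ⦃p q : V⦄, G.Adj p q → kempeRecolor G c x y p ≠ kempeRecolor G c x y q) ∧
    kempeRecolor G c x y x = kempeRecolor G c x y y ∧
    (∀ v, (∃ p : G.Walk x v, p.length ≤ 2) → kempeRecolor G c x y v = c v) ∧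
    (∀ v, kempeRecolor G c x y v ∈ ({1, 2, 3, 4, 5} : Set ℕ)) := by
  have hk : ∀ v, c v ≠ 5 := fun v h => by simpa [h] using hrange v
  have hunchanged : ∀ v, (∃ p : G.Walk x v, p.length ≤ 2) → kempeRecolor G c x y v = c v :=
    fun v ⟨p, hp⟩ => kempeSwap_recolorNear_apply_of_far hproper hk fun q => by
      have := hdist (p.append q.reverse)
      rw [SimpleGraph.Walk.length_append, SimpleGraph.Walk.length_reverse] at this
      omega
  have hc5 : ∀ v, c v ∈ ({1, 2, 3, 4, 5} : Set ℕ) := fun v => by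
    have := hrange v
    simp only [Set.mem_insert_iff, Set.mem_singleton_iff] at this ⊢
    omega
  refine ⟨?_, ?_, hunchanged, ?_⟩
  · rw [kempeRecolor_eq_kempeSwap]
    exact kempeSwap_proper (recolorNear_proper hproper hk)
  · rw [hunchanged x ⟨.nil, by simp⟩, kempeRecolor_eq_kempeSwap,
      kempeSwap_apply_self recolorNear_apply_self hxy]
  · rw [kempeRecolor_eq_kempeSwap]
    exact kempeSwap_mem (recolorNear_mem hc5 (by simp)) (hc5 x) (hc5 y)
end
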